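/- arXiv:0904.4370 — 2 statements merged into one kernel-verified Lean document; each statement's English description precedes it below -/
import Mathlib

section
/- Let f be an expanding map on [0,1) generating a full shift on g symbols, with bounded distortion such that each child cylinder has length at least 1/(gK) times its parent's length. Then for every set A ⊆ [0,1), the net outer measure using dyadic intervals satisfies M^s_∞(A) ≥ (1/(2gK)) · N^s_∞(A), where N^s_∞ is the analogous outer measure using covers by cylinders of f. -/
open Set MeasureTheory Filter
open scoped ENNReal Classical

noncomputable section

/-- A similarity transformation of `ℝ`. -/
def IsSimilarity (f : ℝ → ℝ) : Prop := ∃ a b : ℝ, a ≠ 0 ∧ ∀ x, f x = a * x + b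

/-- Falconer's class `𝒢^s`: Gδ sets all of whose images under countably many
similarities intersect in a set of Hausdorff dimension at least `s`. -/
def falconerClass (s : ℝ) : Set (Set ℝ) :=
  {F | IsGδ F ∧ ∀ T : ℕ → ℝ → ℝ, (∀ i, IsSimilarity (T i)) →
    ENNReal.ofReal s ≤ dimH (⋂ i, T i '' F)}

/-- A probability vector indexed by a finite type. -/
def IsProbVector {ι : Type*} [Fintype ι] (p : ι → ℝ) : Prop :=
  (∀ i, 0 ≤ p i) ∧ ∑ i, p i = 1

/-- A dyadic half-open interval `[2^k m, 2^k (m+1))`. -/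
def IsDyadic (I : Set ℝ) : Prop :=
  ∃ (k m : ℤ), I = Ico ((2:ℝ) ^ k * m) ((2:ℝ) ^ k * (m + 1))

/-- The outer measure `M^s_∞` obtained from countable covers by dyadic intervals. -/
def dyadicMeasure (s : ℝ) (A : Set ℝ) : ℝ≥0∞ :=
  ⨅ (I : ℕ → Set ℝ) (_ : ∀ i, IsDyadic (I i)) (_ : A ⊆ ⋃ i, I i),
    ∑' i, volume (I i) ^ s

/-- Extension of a subset of `[0,1)` to `ℝ` by integer translations. -/
def periodize (A : Set ℝ) : Set ℝ := ⋃ k : ℤ, (fun x => x + (k : ℝ)) '' A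

/-- An expanding interval map on `[0,1)` with `g` full monotone branches,
generating a full shift on `g` symbols. -/
structure ExpandingFullShift where
  g : ℕ
  one_lt_g : 1 < g
  branch : Fin g → Set ℝ
  branch_Ico : ∀ i, ∃ a b : ℝ, a < b ∧ branch i = Ico a b
  branch_cover : (⋃ i, branch i) = Ico (0:ℝ) 1
  branch_disjoint : ∀ i j, i ≠ j → Disjoint (branch i) (branch j)
  f : ℝ → ℝ
  f_onto : ∀ i, f '' branch i = Ico (0:ℝ) 1
  f_mono : ∀ i, StrictMonoOn f (branch i) ∨ StrictAntiOn f (branch i)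
  f_expanding : ∀ i, ∀ x ∈ branch i, ∀ y ∈ branch i, |x - y| ≤ |f x - f y|

namespace ExpandingFullShift

variable (E : ExpandingFullShift)

/-- The symbol `0`. -/
def zeroSym : Fin E.g := ⟨0, Nat.lt_trans Nat.one_pos E.one_lt_g⟩

/-- The cylinder `C_{x₁ … x_n} ⊆ [0,1)` determined by a word `w`. -/
def cylinder (w : List (Fin E.g)) : Set ℝ :=
  {x ∈ Ico (0:ℝ) 1 | ∀ k (hk : k < w.length), E.f^[k] x ∈ E.branch (w.get ⟨k, hk⟩)}

/-- A cylinder in some interval `[k, k+1)`, `k ∈ ℤ` (periodic extension of the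
cylinder structure to `ℝ`). -/
def IsCylinderZ (C : Set ℝ) : Prop :=
  ∃ (w : List (Fin E.g)) (k : ℤ), C = (fun x => x + (k : ℝ)) '' E.cylinder w

/-- The outer measure `N^s_∞` obtained from countable covers by cylinders of `E`. -/
def cylMeasure (s : ℝ) (A : Set ℝ) : ℝ≥0∞ :=
  ⨅ (c : ℕ → List (Fin E.g)) (_ : A ⊆ ⋃ i, E.cylinder (c i)),
    ∑' i, volume (E.cylinder (c i)) ^ s

/-- The outer measure `N^s_∞` from covers by cylinders of the periodic extension. -/
def cylMeasureZ (s : ℝ) (A : Set ℝ) : ℝ≥0∞ :=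
  ⨅ (c : ℕ → Set ℝ) (_ : ∀ i, E.IsCylinderZ (c i)) (_ : A ⊆ ⋃ i, c i),
    ∑' i, volume (c i) ^ s

/-- The empirical frequency `τ^f_w(x,n)/(n-m)` of the word `w` (of length `m`)
in the first `n` symbols of the expansion of `x`. -/
def freq {m : ℕ} (w : Fin m → Fin E.g) (x : ℝ) (n : ℕ) : ℝ :=
  (((Finset.range (n - m)).filter
      (fun i => ∀ k : Fin m, E.f^[i + k] x ∈ E.branch (w k))).card : ℝ) / ((n - m : ℕ) : ℝ)

/-- `G^{f,m}_{p̄}`: the set of points whose length-`m` word frequencies converge to `p̄`. -/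
def Gset (m : ℕ) (p : (Fin m → Fin E.g) → ℝ) : Set ℝ :=
  {x ∈ Ico (0:ℝ) 1 | ∀ w : Fin m → Fin E.g,
    Tendsto (fun n => E.freq w x n) atTop (nhds (p w))}

/-- `G^{f,m}_{p̄}(n,ε)`: points whose empirical length-`m` word frequencies at time `n`
are within `ε` of `p̄` componentwise. -/
def GsetApprox (m : ℕ) (p : (Fin m → Fin E.g) → ℝ) (n : ℕ) (ε : ℝ) : Set ℝ :=
  {x ∈ Ico (0:ℝ) 1 | ∀ w : Fin m → Fin E.g, |E.freq w x n - p w| < ε}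

/-- `p̄ ∈ A^{f,m}(x)`: the vector `p̄` is an accumulation point of the empirical
frequency vectors of `x` as `n → ∞`. -/
def IsFreqAccum (m : ℕ) (p : (Fin m → Fin E.g) → ℝ) (x : ℝ) : Prop :=
  MapClusterPt p atTop (fun n => fun w => E.freq w x n)

/-- `x` is `m`-normal to `f`: every length-`m` word occurs with frequency equal to
the length of the corresponding cylinder. -/
def IsNormal (m : ℕ) (x : ℝ) : Prop :=
  ∀ w : Fin m → Fin E.g,
    Tendsto (fun n => E.freq w x n) atTop (nhds (volume (E.cylinder (List.ofFn w))).toReal)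

/-- Bounded distortion with constant `K`:
`|C_u||C_v|/K ≤ |C_{uv}| ≤ K |C_u||C_v|` for all words `u, v`. -/
def HasBoundedDistortion (K : ℝ) : Prop :=
  ∀ u v : List (Fin E.g),
    volume (E.cylinder (u ++ v)) ≤
      ENNReal.ofReal K * (volume (E.cylinder u) * volume (E.cylinder v)) ∧
    volume (E.cylinder u) * volume (E.cylinder v) ≤
      ENNReal.ofReal K * volume (E.cylinder (u ++ v))

/-- Condition (ii): for each `m` there is `p̄` with `dim_H G^{f,m}_{p̄} = 1`, and for
each word `w` of length `m` there are vectors `q̄` with `q_w ≠ p_w` whose `G`-set has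
Hausdorff dimension arbitrarily close to `1`. -/
def CondII : Prop :=
  ∀ m : ℕ, 0 < m → ∃ p : (Fin m → Fin E.g) → ℝ, IsProbVector p ∧ dimH (E.Gset m p) = 1 ∧
    ∀ w : Fin m → Fin E.g, ∀ t : ℝ≥0∞, t < 1 → ∃ q : (Fin m → Fin E.g) → ℝ,
      IsProbVector q ∧ q w ≠ p w ∧ t ≤ dimH (E.Gset m q)

end ExpandingFullShift

/-!
Given a cover of `A` by dyadic intervals, replace each interval `I` by the stopping cylinders
of the points `x ∈ A ∩ I`: the first cylinder `C_{x₁ … x_n}` of length at most `|I|`. Stopping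
cylinders are pairwise disjoint, and by the ratio bound each is longer than `|I| / (gK)`, so at
most `gK` of them lie inside `I`; since cylinders are intervals, at most two more (those
containing an endpoint of `I`) meet `I`. Hence `A ∩ I` is covered by at most `gK + 2 ≤ 2gK`
cylinders, each of length at most `|I|`. The ratio bound also makes cylinders shrink
geometrically, which guarantees that stopping times exist and lets a finite cover be padded
to a sequence at arbitrarily small cost.
-/

theorem Set.OrdConnected.mem_or_mem_of_not_subset_Ico {α : Type*} [LinearOrder α] {S : Set α}
    (hS : S.OrdConnected) {a b x : α} (hx : x ∈ S ∩ Ico a b) (hsub : ¬S ⊆ Ico a b) :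
    a ∈ S ∨ b ∈ S := by
  obtain ⟨u, hu, huI⟩ := not_subset.1 hsub
  rcases lt_or_ge u a with hua | hau
  · exact Or.inl (hS.out hu hx.1 ⟨hua.le, hx.2.1⟩)
  · exact Or.inr (hS.out hx.1 hu ⟨hx.2.2.le, not_lt.1 fun hub => huI ⟨hau, hub⟩⟩)

theorem Set.PairwiseDisjoint.encard_mul_le_measure_biUnion {α ι : Type*} [MeasurableSpace α]
    [Countable ι] {μ : Measure α} {S : Set ι} {C : ι → Set α} {δ : ℝ≥0∞}
    (hd : S.PairwiseDisjoint C) (hm : ∀ i ∈ S, MeasurableSet (C i))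
    (hδ : ∀ i ∈ S, δ ≤ μ (C i)) :
    S.encard * δ ≤ μ (⋃ i ∈ S, C i) := by
  rw [measure_biUnion S.to_countable hd hm, ← ENNReal.tsum_set_const]
  exact ENNReal.tsum_le_tsum fun i => hδ i i.2

theorem IsDyadic.exists_Ico {I : Set ℝ} (hI : IsDyadic I) : ∃ a b : ℝ, a < b ∧ I = Ico a b := by
  obtain ⟨k, m, rfl⟩ := hI
  exact ⟨_, _, mul_lt_mul_of_pos_left (lt_add_one _) (zpow_pos two_pos k), rfl⟩

namespace ExpandingFullShift

section Cylinders

variable (E : ExpandingFullShift)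

lemma exists_mem_branch {x : ℝ} (hx : x ∈ Ico (0 : ℝ) 1) : ∃ i, x ∈ E.branch i := by
  rwa [← E.branch_cover, mem_iUnion] at hx

lemma mapsTo_Ico : MapsTo E.f (Ico 0 1) (Ico 0 1) := fun _ hx =>
  let ⟨i, hi⟩ := E.exists_mem_branch hx
  E.f_onto i ▸ mem_image_of_mem E.f hi

/-- The junk value `zeroSym` is taken only off `[0,1)`. -/
def digit (x : ℝ) (k : ℕ) : Fin E.g :=
  if h : ∃ i, E.f^[k] x ∈ E.branch i then h.choose else E.zeroSym

lemma digit_eq_of_mem {x : ℝ} {k : ℕ} {i : Fin E.g} (hi : E.f^[k] x ∈ E.branch i) :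
    E.digit x k = i := by
  have h : ∃ i, E.f^[k] x ∈ E.branch i := ⟨i, hi⟩
  rw [digit, dif_pos h]
  by_contra hne
  exact Set.disjoint_left.1 (E.branch_disjoint _ _ hne) h.choose_spec hi

lemma mem_branch_digit {x : ℝ} (hx : x ∈ Ico (0 : ℝ) 1) (k : ℕ) :
    E.f^[k] x ∈ E.branch (E.digit x k) := by
  obtain ⟨i, hi⟩ := E.exists_mem_branch (E.mapsTo_Ico.iterate k hx)
  rwa [E.digit_eq_of_mem hi]

def digits (x : ℝ) (n : ℕ) : List (Fin E.g) := List.ofFn fun k : Fin n => E.digit x k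

@[simp] lemma length_digits (x : ℝ) (n : ℕ) : (E.digits x n).length = n := List.length_ofFn

@[simp] lemma digits_zero (x : ℝ) : E.digits x 0 = [] := List.ofFn_zero

lemma digits_succ (x : ℝ) (n : ℕ) : E.digits x (n + 1) = E.digits x n ++ [E.digit x n] := by
  rw [digits, List.ofFn_succ']
  simp [digits, List.concat_eq_append, Fin.last]

lemma mem_cylinder_digits {x : ℝ} (hx : x ∈ Ico (0 : ℝ) 1) (n : ℕ) :
    x ∈ E.cylinder (E.digits x n) :=
  ⟨hx, fun k _ => by simpa [digits] using E.mem_branch_digit hx k⟩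

lemma digits_eq_of_mem_cylinder_digits {x y : ℝ} {m n : ℕ}
    (hy : y ∈ E.cylinder (E.digits x n)) (hmn : m ≤ n) : E.digits y m = E.digits x m := by
  simp only [digits, List.ofFn_inj]
  funext k
  exact E.digit_eq_of_mem (by simpa [digits] using hy.2 k (by simp; omega))

@[simp] lemma cylinder_nil : E.cylinder [] = Ico 0 1 := by
  ext x; simp [cylinder]

@[simp] lemma volume_cylinder_nil : volume (E.cylinder []) = 1 := by simp

lemma volume_cylinder_ne_top (w : List (Fin E.g)) : volume (E.cylinder w) ≠ ⊤ :=
  measure_ne_top_of_subset (fun _ hx => hx.1) (by simp)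

lemma cylinder_cons (i : Fin E.g) (w : List (Fin E.g)) :
    E.cylinder (i :: w) = E.branch i ∩ E.f ⁻¹' E.cylinder w := by
  ext x
  constructor
  · rintro ⟨hx, h⟩
    refine ⟨by simpa using h 0 (by simp), E.mapsTo_Ico hx, fun k hk => ?_⟩
    simpa [Function.iterate_succ_apply] using h (k + 1) (by simpa using hk)
  · rintro ⟨hi, -, h⟩
    refine ⟨E.branch_cover ▸ mem_iUnion_of_mem i hi, fun k hk => ?_⟩
    cases k with
    | zero => simpa using hi
    | succ k => simpa [Function.iterate_succ_apply] using h k (by simpa using hk)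

lemma ordConnected_cylinder (w : List (Fin E.g)) : (E.cylinder w).OrdConnected := by
  induction w with
  | nil => rw [cylinder_nil]; exact ordConnected_Ico
  | cons i w ih =>
    rw [cylinder_cons]
    refine ⟨fun x hx y hy z hz => ?_⟩
    obtain ⟨a, b, -, hab⟩ := E.branch_Ico i
    have hzi : z ∈ E.branch i := by
      have hx' := hx.1; have hy' := hy.1
      rw [hab] at hx' hy' ⊢
      exact ⟨hx'.1.trans hz.1, hz.2.trans_lt hy'.2⟩
    refine ⟨hzi, ?_⟩
    rcases E.f_mono i with hm | hm
    · exact ih.out hx.2 hy.2 ⟨hm.monotoneOn hx.1 hzi hz.1, hm.monotoneOn hzi hy.1 hz.2⟩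
    · exact ih.out hy.2 hx.2 ⟨hm.antitoneOn hzi hy.1 hz.2, hm.antitoneOn hx.1 hzi hz.1⟩

lemma measurableSet_cylinder (w : List (Fin E.g)) : MeasurableSet (E.cylinder w) :=
  (E.ordConnected_cylinder w).measurableSet

lemma mem_cylinder_append_singleton {w : List (Fin E.g)} {j : Fin E.g} {x : ℝ} :
    x ∈ E.cylinder (w ++ [j]) ↔ x ∈ E.cylinder w ∧ E.f^[w.length] x ∈ E.branch j := by
  constructor
  · rintro ⟨hx, h⟩
    refine ⟨⟨hx, fun k hk => ?_⟩, by simpa using h w.length (by simp)⟩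
    simpa [List.getElem_append_left hk] using h k (by simp; omega)
  · rintro ⟨⟨hx, h⟩, hj⟩
    refine ⟨hx, fun k hk => ?_⟩
    rcases Nat.lt_or_ge k w.length with hlt | hge
    · simpa [List.getElem_append_left hlt] using h k hlt
    · obtain rfl : k = w.length := by simp at hk; omega
      simpa using hj

lemma cylinder_append_singleton_subset (w : List (Fin E.g)) (j : Fin E.g) :
    E.cylinder (w ++ [j]) ⊆ E.cylinder w := fun _ hx => (E.mem_cylinder_append_singleton.1 hx).1

lemma disjoint_cylinder_append_singleton (w : List (Fin E.g)) {i j : Fin E.g} (hij : i ≠ j) :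
    Disjoint (E.cylinder (w ++ [i])) (E.cylinder (w ++ [j])) :=
  Set.disjoint_left.2 fun _ hi hj => Set.disjoint_left.1 (E.branch_disjoint _ _ hij)
    (E.mem_cylinder_append_singleton.1 hi).2 (E.mem_cylinder_append_singleton.1 hj).2

lemma sum_volume_cylinder_append_singleton_le (w : List (Fin E.g)) :
    ∑ j, volume (E.cylinder (w ++ [j])) ≤ volume (E.cylinder w) := by
  rw [← measure_biUnion_finset (fun i _ j _ hij => E.disjoint_cylinder_append_singleton w hij)
    (fun j _ => E.measurableSet_cylinder _)]
  exact measure_mono (iUnion₂_subset fun j _ => E.cylinder_append_singleton_subset w j)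

lemma cylMeasure_le_tsum_add_tsum (s : ℝ) {A : Set ℝ} {W : Set (List (Fin E.g))}
    (hA : A ⊆ ⋃ w ∈ W, E.cylinder w) (u : ℕ → List (Fin E.g)) :
    E.cylMeasure s A ≤
      ∑' w : W, volume (E.cylinder w) ^ s + ∑' n, volume (E.cylinder (u n)) ^ s := by
  obtain ⟨e, he⟩ := Countable.exists_injective_nat W
  set F : List (Fin E.g) → ℝ≥0∞ := fun w => volume (E.cylinder w) ^ s
  -- enumerate `W` along the injection `e`, filling the gaps with the words `u n`
  let cover : ℕ → List (Fin E.g) := Function.extend e Subtype.val u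
  have hcover : A ⊆ ⋃ n, E.cylinder (cover n) := by
    intro x hx
    obtain ⟨w, hw, hxw⟩ := mem_iUnion₂.1 (hA hx)
    exact mem_iUnion.2 ⟨e ⟨w, hw⟩, by simpa only [cover, he.extend_apply] using hxw⟩
  have hle : ∀ n, F (cover n) ≤ Function.extend e (F ∘ Subtype.val) 0 n + F (u n) := by
    intro n
    by_cases hn : ∃ w, e w = n
    · obtain ⟨w, rfl⟩ := hn
      simp only [cover, he.extend_apply]
      exact le_self_add
    · simp only [cover, Function.extend_apply' _ _ _ hn, Pi.zero_apply, zero_add, le_refl]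
  calc E.cylMeasure s A ≤ ∑' n, F (cover n) := iInf₂_le cover hcover
    _ ≤ ∑' n, (Function.extend e (F ∘ Subtype.val) 0 n + F (u n)) := ENNReal.tsum_le_tsum hle
    _ = ∑' w : W, F w + ∑' n, F (u n) := by rw [ENNReal.tsum_add, tsum_extend_zero he]; rfl

end Cylinders

section StoppingWords

variable (E : ExpandingFullShift)

/-- The junk value `0` is also taken when no cylinder along `x` has length at most `ℓ`. -/
def stopTime (ℓ : ℝ≥0∞) (x : ℝ) : ℕ := sInf {n | volume (E.cylinder (E.digits x n)) ≤ ℓ}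

def stopWord (ℓ : ℝ≥0∞) (x : ℝ) : List (Fin E.g) := E.digits x (E.stopTime ℓ x)

variable {E} {ℓ : ℝ≥0∞}

lemma volume_cylinder_stopWord_le {x : ℝ} (h : ∃ n, volume (E.cylinder (E.digits x n)) ≤ ℓ) :
    volume (E.cylinder (E.stopWord ℓ x)) ≤ ℓ :=
  Nat.sInf_mem h

lemma stopWord_eq_nil (hℓ : 1 ≤ ℓ) (x : ℝ) : E.stopWord ℓ x = [] := by
  have h0 : E.stopTime ℓ x = 0 :=
    Nat.eq_zero_of_le_zero (Nat.sInf_le (show 0 ∈ {n | _} by simpa using hℓ))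
  rw [stopWord, h0, digits_zero]

lemma lt_volume_cylinder_digits_of_lt_stopTime {x : ℝ} {n : ℕ} (hn : n < E.stopTime ℓ x) :
    ℓ < volume (E.cylinder (E.digits x n)) :=
  not_le.1 (Nat.notMem_of_lt_sInf hn)

lemma stopWord_eq_of_mem_cylinder {x y : ℝ} (h : ∃ n, volume (E.cylinder (E.digits x n)) ≤ ℓ)
    (hy : y ∈ E.cylinder (E.stopWord ℓ x)) : E.stopWord ℓ y = E.stopWord ℓ x := by
  set n := E.stopTime ℓ x
  have hdigits : ∀ m ≤ n, E.digits y m = E.digits x m := fun m hm =>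
    E.digits_eq_of_mem_cylinder_digits hy hm
  have hmem : volume (E.cylinder (E.digits y n)) ≤ ℓ := by
    rw [hdigits n le_rfl]; exact Nat.sInf_mem h
  have hle : E.stopTime ℓ y ≤ n := Nat.sInf_le hmem
  have hge : n ≤ E.stopTime ℓ y := by
    refine not_lt.1 fun hlt => (lt_volume_cylinder_digits_of_lt_stopTime hlt).not_ge ?_
    rw [← hdigits _ hle]
    exact volume_cylinder_stopWord_le ⟨n, hmem⟩
  rw [stopWord, stopWord, le_antisymm hle hge, hdigits n le_rfl]

lemma pairwiseDisjoint_cylinder_stopWord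
    (h : ∀ x, ∃ n, volume (E.cylinder (E.digits x n)) ≤ ℓ) :
    (range (E.stopWord ℓ)).PairwiseDisjoint E.cylinder := by
  rintro _ ⟨x, rfl⟩ _ ⟨y, rfl⟩ hne
  refine Set.disjoint_left.2 fun z hzx hzy => hne ?_
  rw [← stopWord_eq_of_mem_cylinder (h x) hzx, stopWord_eq_of_mem_cylinder (h y) hzy]

end StoppingWords

def HasChildRatioBound (E : ExpandingFullShift) (c : ℝ≥0∞) : Prop :=
  ∀ (w : List (Fin E.g)) (i : Fin E.g),
    volume (E.cylinder w) ≤ c * volume (E.cylinder (w ++ [i]))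

namespace HasChildRatioBound

variable {E : ExpandingFullShift} {c : ℝ≥0∞}

theorem natCast_le (hc : E.HasChildRatioBound c) : (E.g : ℝ≥0∞) ≤ c :=
  calc (E.g : ℝ≥0∞) = ∑ _j : Fin E.g, volume (E.cylinder []) := by simp
    _ ≤ ∑ j, c * volume (E.cylinder ([] ++ [j])) := Finset.sum_le_sum fun j _ => hc [] j
    _ = c * ∑ j, volume (E.cylinder ([] ++ [j])) := (Finset.mul_sum ..).symm
    _ ≤ c * 1 := by
      gcongr; simpa using E.sum_volume_cylinder_append_singleton_le []
    _ = c := mul_one c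

theorem two_le (hc : E.HasChildRatioBound c) : 2 ≤ c :=
  le_trans (by exact_mod_cast E.one_lt_g) hc.natCast_le

theorem volume_cylinder_append_singleton_le (hc : E.HasChildRatioBound c)
    (w : List (Fin E.g)) (j : Fin E.g) :
    volume (E.cylinder (w ++ [j])) ≤ (1 - c⁻¹) * volume (E.cylinder w) := by
  have : Nontrivial (Fin E.g) := Fin.nontrivial_iff_two_le.2 E.one_lt_g
  obtain ⟨j', hj'⟩ := exists_ne j
  have hsum : volume (E.cylinder (w ++ [j])) + volume (E.cylinder (w ++ [j'])) ≤
      volume (E.cylinder w) := by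
    rw [← measure_union (E.disjoint_cylinder_append_singleton w hj'.symm)
      (E.measurableSet_cylinder _)]
    exact measure_mono (union_subset (E.cylinder_append_singleton_subset w j)
      (E.cylinder_append_singleton_subset w j'))
  have hsibling : c⁻¹ * volume (E.cylinder w) ≤ volume (E.cylinder (w ++ [j'])) :=
    calc c⁻¹ * volume (E.cylinder w) ≤ c⁻¹ * (c * volume (E.cylinder (w ++ [j']))) := by
          gcongr; exact hc w j'
      _ = c⁻¹ * c * volume (E.cylinder (w ++ [j'])) := (mul_assoc ..).symm
      _ ≤ volume (E.cylinder (w ++ [j'])) :=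
          mul_le_of_le_one_left zero_le (ENNReal.inv_mul_le_one c)
  calc volume (E.cylinder (w ++ [j]))
      ≤ volume (E.cylinder w) - volume (E.cylinder (w ++ [j'])) :=
        ENNReal.le_sub_of_add_le_right (E.volume_cylinder_ne_top _) hsum
    _ ≤ volume (E.cylinder w) - c⁻¹ * volume (E.cylinder w) := tsub_le_tsub_left hsibling _
    _ = (1 - c⁻¹) * volume (E.cylinder w) := by
      rw [ENNReal.sub_mul fun _ _ => E.volume_cylinder_ne_top w, one_mul]

theorem volume_cylinder_le_pow_length (hc : E.HasChildRatioBound c) (w : List (Fin E.g)) :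
    volume (E.cylinder w) ≤ (1 - c⁻¹) ^ w.length := by
  induction w using List.reverseRecOn with
  | nil => simp
  | append_singleton w j ih =>
    rw [List.length_append, List.length_singleton, pow_succ']
    exact (hc.volume_cylinder_append_singleton_le w j).trans (by gcongr)

theorem exists_volume_cylinder_lt (hc : E.HasChildRatioBound c) (hc_top : c ≠ ⊤) {ε : ℝ≥0∞}
    (hε : ε ≠ 0) : ∃ n, ∀ w : List (Fin E.g), w.length = n → volume (E.cylinder w) < ε := by
  have hθ : 1 - c⁻¹ < 1 :=
    ENNReal.sub_lt_self ENNReal.one_ne_top one_ne_zero (ENNReal.inv_ne_zero.2 hc_top)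
  obtain ⟨n, hn⟩ := ((ENNReal.tendsto_pow_atTop_nhds_zero_of_lt_one hθ).eventually
    (gt_mem_nhds (pos_iff_ne_zero.2 hε))).exists
  exact ⟨n, fun w hw => (hc.volume_cylinder_le_pow_length w).trans_lt (hw ▸ hn)⟩

theorem exists_volume_cylinder_digits_le (hc : E.HasChildRatioBound c) (hc_top : c ≠ ⊤)
    {ℓ : ℝ≥0∞} (hℓ : ℓ ≠ 0) (x : ℝ) : ∃ n, volume (E.cylinder (E.digits x n)) ≤ ℓ :=
  let ⟨n, hn⟩ := hc.exists_volume_cylinder_lt hc_top hℓ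
  ⟨n, (hn _ (E.length_digits x n)).le⟩

theorem exists_tsum_rpow_volume_cylinder_le (hc : E.HasChildRatioBound c) (hc_top : c ≠ ⊤)
    {s : ℝ} (hs : 0 < s) {ε : ℝ≥0∞} (hε : ε ≠ 0) :
    ∃ u : ℕ → List (Fin E.g), ∑' n, volume (E.cylinder (u n)) ^ s ≤ ε := by
  obtain ⟨δ, hδ, hδε⟩ := ENNReal.exists_pos_sum_of_countable hε ℕ
  have hsmall : ∀ n, ∃ w : List (Fin E.g), volume (E.cylinder w) ^ s ≤ δ n := by
    intro n
    obtain ⟨m, hm⟩ := hc.exists_volume_cylinder_lt hc_top (ε := (δ n : ℝ≥0∞) ^ s⁻¹)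
      (ENNReal.rpow_pos (by simpa using hδ n) ENNReal.coe_ne_top).ne'
    refine ⟨List.replicate m E.zeroSym, ?_⟩
    calc volume (E.cylinder (List.replicate m E.zeroSym)) ^ s
        ≤ ((δ n : ℝ≥0∞) ^ s⁻¹) ^ s := ENNReal.rpow_le_rpow (hm _ List.length_replicate).le hs.le
      _ = δ n := ENNReal.rpow_inv_rpow hs.ne' _
  choose u hu using hsmall
  exact ⟨u, (ENNReal.tsum_le_tsum hu).trans hδε.le⟩

theorem cylMeasure_le_tsum (hc : E.HasChildRatioBound c) (hc_top : c ≠ ⊤) {s : ℝ} (hs : 0 < s)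
    {A : Set ℝ} {W : Set (List (Fin E.g))} (hA : A ⊆ ⋃ w ∈ W, E.cylinder w) :
    E.cylMeasure s A ≤ ∑' w : W, volume (E.cylinder w) ^ s := by
  refine ENNReal.le_of_forall_pos_le_add fun ε hε _ => ?_
  obtain ⟨u, hu⟩ := hc.exists_tsum_rpow_volume_cylinder_le hc_top hs (ENNReal.coe_ne_zero.2 hε.ne')
  exact (E.cylMeasure_le_tsum_add_tsum s hA u).trans (by gcongr)

theorem lt_mul_volume_cylinder_stopWord (hc : E.HasChildRatioBound c) {ℓ : ℝ≥0∞} (hℓ : ℓ < 1)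
    (x : ℝ) : ℓ < c * volume (E.cylinder (E.stopWord ℓ x)) := by
  rcases hn : E.stopTime ℓ x with _ | n
  · rw [stopWord, hn, digits_zero, volume_cylinder_nil, mul_one]
    exact hℓ.trans_le (one_le_two.trans hc.two_le)
  · rw [stopWord, hn, digits_succ]
    exact (lt_volume_cylinder_digits_of_lt_stopTime (by omega)).trans_le (hc _ _)

theorem encard_le_of_cylinder_subset_Ico (hc : E.HasChildRatioBound c) (hc_top : c ≠ ⊤)
    {a b : ℝ} (hab : a < b) (hℓ1 : volume (Ico a b) < 1) {W : Set (List (Fin E.g))}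
    (hW : W ⊆ range (E.stopWord (volume (Ico a b)))) (hsub : ∀ w ∈ W, E.cylinder w ⊆ Ico a b) :
    (W.encard : ℝ≥0∞) ≤ c := by
  set ℓ := volume (Ico a b)
  have hℓ0 : ℓ ≠ 0 := by simp [ℓ, hab]
  have hdisj : W.PairwiseDisjoint E.cylinder :=
    (pairwiseDisjoint_cylinder_stopWord (hc.exists_volume_cylinder_digits_le hc_top hℓ0)).subset hW
  have h : W.encard * (ℓ / c) ≤ ℓ :=
    (hdisj.encard_mul_le_measure_biUnion (fun w _ => E.measurableSet_cylinder w) fun w hw => by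
      obtain ⟨x, rfl⟩ := hW hw
      exact ENNReal.div_le_of_le_mul' (hc.lt_mul_volume_cylinder_stopWord hℓ1 x).le).trans
    (measure_mono (iUnion₂_subset hsub))
  rw [← mul_div_assoc, ENNReal.div_le_iff (zero_lt_two.trans_le hc.two_le).ne' hc_top,
    mul_comm ℓ] at h
  exact (ENNReal.mul_le_mul_iff_left hℓ0 measure_Ico_lt_top.ne).1 h

theorem encard_image_stopWord_le (hc : E.HasChildRatioBound c) (hc_top : c ≠ ⊤) {a b : ℝ}
    (hab : a < b) {B : Set ℝ} (hB : B ⊆ Ico 0 1 ∩ Ico a b) :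
    ((E.stopWord (volume (Ico a b)) '' B).encard : ℝ≥0∞) ≤ 2 * c := by
  set ℓ := volume (Ico a b)
  set W := E.stopWord ℓ '' B
  have hℓ0 : ℓ ≠ 0 := by simp [ℓ, hab]
  have hex := hc.exists_volume_cylinder_digits_le hc_top hℓ0
  rcases le_or_gt 1 ℓ with hℓ1 | hℓ1
  · have hW : W ⊆ {[]} := image_subset_iff.2 fun x _ => stopWord_eq_nil hℓ1 x
    calc (W.encard : ℝ≥0∞) ≤ 1 := by
          exact_mod_cast (encard_le_encard hW).trans (encard_singleton _).le
      _ ≤ 2 * c := one_le_two.trans (le_mul_of_one_le_right' (one_le_two.trans hc.two_le))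
  have hdisj : W.PairwiseDisjoint E.cylinder :=
    (pairwiseDisjoint_cylinder_stopWord hex).subset (image_subset_range _ _)
  set Win := {w ∈ W | E.cylinder w ⊆ Ico a b}
  have hW : W ⊆ Win ∪ {w ∈ W | a ∈ E.cylinder w} ∪ {w ∈ W | b ∈ E.cylinder w} := by
    rintro _ ⟨x, hx, rfl⟩
    have hxW : E.stopWord ℓ x ∈ W := mem_image_of_mem _ hx
    by_cases hsub : E.cylinder (E.stopWord ℓ x) ⊆ Ico a b
    · exact Or.inl (Or.inl ⟨hxW, hsub⟩)
    rcases (E.ordConnected_cylinder _).mem_or_mem_of_not_subset_Ico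
      ⟨E.mem_cylinder_digits (hB hx).1 _, (hB hx).2⟩ hsub with h | h
    · exact Or.inl (Or.inr ⟨hxW, h⟩)
    · exact Or.inr ⟨hxW, h⟩
  have hthrough : ∀ p : ℝ, {w ∈ W | p ∈ E.cylinder w}.encard ≤ 1 := fun p =>
    encard_le_one_iff.2 fun w v hw hv =>
      hdisj.elim hw.1 hv.1 (not_disjoint_iff.2 ⟨p, hw.2, hv.2⟩)
  have hinside : (Win.encard : ℝ≥0∞) ≤ c :=
    hc.encard_le_of_cylinder_subset_Ico hc_top hab hℓ1
      ((sep_subset _ _).trans (image_subset_range _ _)) fun _ hw => hw.2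
  calc (W.encard : ℝ≥0∞)
      ≤ (Win.encard + {w ∈ W | a ∈ E.cylinder w}.encard +
          {w ∈ W | b ∈ E.cylinder w}.encard : ℕ∞) := by
        exact_mod_cast (encard_le_encard hW).trans
          ((encard_union_le _ _).trans (add_le_add_left (encard_union_le _ _) _))
    _ ≤ c + 1 + 1 := by
        push_cast
        gcongr
        · exact_mod_cast hthrough a
        · exact_mod_cast hthrough b
    _ ≤ 2 * c := by
        rw [add_assoc, one_add_one_eq_two, two_mul]
        gcongr
        exact hc.two_le

theorem cylMeasure_le_mul_tsum (hc : E.HasChildRatioBound c) (hc_top : c ≠ ⊤) {s : ℝ}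
    (hs : 0 < s) {A : Set ℝ} (hA : A ⊆ Ico 0 1) {I : ℕ → Set ℝ}
    (hI : ∀ i, ∃ a b : ℝ, a < b ∧ I i = Ico a b) (hcov : A ⊆ ⋃ i, I i) :
    E.cylMeasure s A ≤ 2 * c * ∑' i, volume (I i) ^ s := by
  set W : ℕ → Set (List (Fin E.g)) := fun i => E.stopWord (volume (I i)) '' (A ∩ I i)
  have hWcov : A ⊆ ⋃ w ∈ ⋃ i, W i, E.cylinder w := by
    intro x hx
    obtain ⟨i, hi⟩ := mem_iUnion.1 (hcov hx)
    exact mem_biUnion (mem_iUnion.2 ⟨i, mem_image_of_mem _ ⟨hx, hi⟩⟩)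
      (E.mem_cylinder_digits (hA hx) _)
  have hW : ∀ i, ∑' w : W i, volume (E.cylinder w) ^ s ≤ 2 * c * volume (I i) ^ s := by
    intro i
    obtain ⟨a, b, hab, hIi⟩ := hI i
    have hex := hc.exists_volume_cylinder_digits_le hc_top (ℓ := volume (I i)) (by simp [hIi, hab])
    calc ∑' w : W i, volume (E.cylinder w) ^ s ≤ ∑' _w : W i, volume (I i) ^ s :=
          ENNReal.tsum_le_tsum fun w => ENNReal.rpow_le_rpow (by
            obtain ⟨x, -, hx⟩ := w.2
            rw [← hx]
            exact volume_cylinder_stopWord_le (hex x)) hs.le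
      _ = (W i).encard * volume (I i) ^ s := ENNReal.tsum_set_const _ _
      _ ≤ 2 * c * volume (I i) ^ s := by
          gcongr
          simp only [W, hIi]
          exact hc.encard_image_stopWord_le hc_top hab
            (subset_inter (inter_subset_left.trans hA) inter_subset_right)
  calc E.cylMeasure s A ≤ ∑' w : ⋃ i, W i, volume (E.cylinder w) ^ s :=
        hc.cylMeasure_le_tsum hc_top hs hWcov
    _ ≤ ∑' i, ∑' w : W i, volume (E.cylinder w) ^ s :=
        ENNReal.tsum_iUnion_le_tsum (fun w => volume (E.cylinder w) ^ s) W
    _ ≤ ∑' i, 2 * c * volume (I i) ^ s := ENNReal.tsum_le_tsum hW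
    _ = 2 * c * ∑' i, volume (I i) ^ s := ENNReal.tsum_mul_left

end HasChildRatioBound

end ExpandingFullShift

open ExpandingFullShift in
theorem dyadicMeasure_ge_cylMeasure_general (E : ExpandingFullShift) (K : ℝ)
    (hratio : ∀ (w : List (Fin E.g)) (i : Fin E.g),
      volume (E.cylinder w) ≤ ENNReal.ofReal ((E.g : ℝ) * K) * volume (E.cylinder (w ++ [i])))
    (s : ℝ) (hs0 : 0 < s) (A : Set ℝ) (hA : A ⊆ Ico (0:ℝ) 1) :
    E.cylMeasure s A ≤ ENNReal.ofReal (2 * (E.g : ℝ) * K) * dyadicMeasure s A := by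
  have hc : E.HasChildRatioBound (ENNReal.ofReal ((E.g : ℝ) * K)) := hratio
  have h2c : ENNReal.ofReal (2 * (E.g : ℝ) * K) = 2 * ENNReal.ofReal ((E.g : ℝ) * K) := by
    rw [mul_assoc, ENNReal.ofReal_mul zero_le_two, ENNReal.ofReal_ofNat]
  have h2c0 : 2 * ENNReal.ofReal ((E.g : ℝ) * K) ≠ 0 :=
    mul_ne_zero two_ne_zero (zero_lt_two.trans_le hc.two_le).ne'
  have h2c_top : 2 * ENNReal.ofReal ((E.g : ℝ) * K) ≠ ⊤ :=
    ENNReal.mul_ne_top ENNReal.ofNat_ne_top ENNReal.ofReal_ne_top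
  rw [h2c, dyadicMeasure]
  simp only [ENNReal.mul_iInf_of_ne h2c0 h2c_top]
  exact le_iInf fun I => le_iInf fun hI => le_iInf fun hcov =>
    hc.cylMeasure_le_mul_tsum ENNReal.ofReal_ne_top hs0 hA (fun i => (hI i).exists_Ico) hcov

open ExpandingFullShift in
/-- if every child cylinder has length at least `1/(gK)` times its
parent's, then `M^s_∞(A) ≥ N^s_∞(A)/(2gK)` for every `A ⊆ [0,1)`. -/
theorem dyadicMeasure_ge_cylMeasure (E : ExpandingFullShift) (K : ℝ) (hK : 0 < K)
    (hratio : ∀ (w : List (Fin E.g)) (i : Fin E.g),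
      volume (E.cylinder w) ≤ ENNReal.ofReal ((E.g : ℝ) * K) * volume (E.cylinder (w ++ [i])))
    (s : ℝ) (hs0 : 0 < s) (hs1 : s ≤ 1) (A : Set ℝ) (hA : A ⊆ Ico (0:ℝ) 1) :
    E.cylMeasure s A ≤ ENNReal.ofReal (2 * (E.g : ℝ) * K) * dyadicMeasure s A :=
  dyadicMeasure_ge_cylMeasure_general E K hratio s hs0 A hA
end
end

section
/- Let β ∈ (1,2) be such that the β-expansion of 1 terminates (d(1,β) = j₀…j_{k−1}0^∞). Then for any cylinder C_{x₀…x_{n−1}} of the β-shift there exists l ≥ 0 such that C_{x₀…x_{n−1}} = C_{x₀…x_{n−1}0^l}, the cylinder C_{x₀…x_{n−1}0^{l+1}} is a similar copy of [0,1) scaled by β^{−(n+l+1)}, and |C_{x₀…x_{n−1}0^{l+1}}| ≥ (1/β)|C_{x₀…x_{n−1}}|. -/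
open Set MeasureTheory Filter
open scoped ENNReal Classical

noncomputable section

/-- The β-transformation `x ↦ βx mod 1`. -/
def betaMap (β : ℝ) (x : ℝ) : ℝ := Int.fract (β * x)

/-- The digits `d_n(x,β) = ⌊β f_β^n(x)⌋` of the greedy `β`-expansion. -/
def betaDigit (β x : ℝ) (n : ℕ) : ℤ := ⌊β * (betaMap β)^[n] x⌋

/-- The `β`-expansion of `1` terminates: `d(1,β) = j₀ … j_{k-1} 0^∞`. -/
def TerminatesAtOne (β : ℝ) : Prop := ∃ N : ℕ, ∀ n ≥ N, betaDigit β 1 n = 0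

/-- The cylinder `[i₀ … i_{n-1}] ⊆ [0,1)` of the `β`-expansion. -/
def betaCyl (β : ℝ) (w : List ℤ) : Set ℝ :=
  {x ∈ Ico (0:ℝ) 1 | ∀ k (hk : k < w.length), betaDigit β x k = w.get ⟨k, hk⟩}

/-- The outer measure `N^s_∞` from countable covers by cylinders of the `β`-expansion. -/
def betaCylMeasure (β s : ℝ) (A : Set ℝ) : ℝ≥0∞ :=
  ⨅ (c : ℕ → List ℤ) (_ : A ⊆ ⋃ i, betaCyl β (c i)),
    ∑' i, volume (betaCyl β (c i)) ^ s

/-- The empirical frequency `τ^β_w(x,n)/(n-m)` of the binary word `w` of length `m`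
among the first `n` digits of the `β`-expansion of `x`. -/
def betaFreq (β : ℝ) {m : ℕ} (w : Fin m → Fin 2) (x : ℝ) (n : ℕ) : ℝ :=
  (((Finset.range (n - m)).filter
      (fun i => ∀ k : Fin m, betaDigit β x (i + k) = ((w k : ℕ) : ℤ))).card : ℝ) / ((n - m : ℕ) : ℝ)

/-- `G^{β,m}_{p̄}`: points whose length-`m` word frequencies in the `β`-expansion
converge to `p̄`. -/
def betaGset (β : ℝ) (m : ℕ) (p : (Fin m → Fin 2) → ℝ) : Set ℝ :=
  {x ∈ Ico (0:ℝ) 1 | ∀ w : Fin m → Fin 2,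
    Tendsto (fun n => betaFreq β w x n) atTop (nhds (p w))}

/-- `G^{β,m}_{p̄}(n,ε)`: points whose empirical frequencies at time `n` are within `ε`
of `p̄` componentwise. -/
def betaGsetApprox (β : ℝ) (m : ℕ) (p : (Fin m → Fin 2) → ℝ) (n : ℕ) (ε : ℝ) : Set ℝ :=
  {x ∈ Ico (0:ℝ) 1 | ∀ w : Fin m → Fin 2, |betaFreq β w x n - p w| < ε}

/-- `p̄ ∈ A^{β,m}(x)`: `p̄` is an accumulation point of the empirical frequency vectors
of the `β`-expansion of `x`. -/
def betaFreqAccum (β : ℝ) (m : ℕ) (p : (Fin m → Fin 2) → ℝ) (x : ℝ) : Prop :=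
  MapClusterPt p atTop (fun n => fun w => betaFreq β w x n)

/-- The constant `Q(s,β) = β^{-s} Σ_{i=0}^∞ (1 - 1/β)^{is}`. -/
def Qconst (s β : ℝ) : ℝ := β ^ (-s) * ∑' i : ℕ, ((1 - 1/β) ^ i) ^ s


/-!
Fixing the first `k` digits `u₀ … u_{k-1}` of the greedy expansion of `x ∈ [0,1)` means
`f_β^i x = β^i (x - S_i)` with `S_i = ∑_{j<i} u_j β^{-(j+1)}`, i.e. `x ∈ [S_i, S_i + β^{-i})`
for all `i ≤ k`. Digits are nonnegative, so `S_i` increases and a nonempty cylinder of length `n`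
is an interval `[S_n, b)` with `b ≤ S_n + β^{-n}`. Appending zeros leaves `S` unchanged, so
appending `0^j` only cuts the cylinder to `[S_n, min b (S_n + β^{-(n+j)}))`; take `l` with
`β^{-(n+l+1)} < b - S_n ≤ β^{-(n+l)}`.
-/

def betaPartialSum (β : ℝ) (u : ℕ → ℤ) (k : ℕ) : ℝ :=
  ∑ i ∈ Finset.range k, (u i : ℝ) / β ^ (i + 1)

def betaInterval (β : ℝ) (u : ℕ → ℤ) (k : ℕ) : Set ℝ :=
  Ico (betaPartialSum β u k) (betaPartialSum β u k + (β ^ k)⁻¹)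

section PartialSums

variable {β : ℝ} (u : ℕ → ℤ)

lemma betaPartialSum_succ (k : ℕ) :
    betaPartialSum β u (k + 1) = betaPartialSum β u k + u k / β ^ (k + 1) :=
  Finset.sum_range_succ _ _

lemma betaPartialSum_add_of_eq_zero {n : ℕ} (hu : ∀ i ≥ n, u i = 0) (j : ℕ) :
    betaPartialSum β u (n + j) = betaPartialSum β u n := by
  unfold betaPartialSum
  rw [Finset.sum_range_add, add_eq_left]
  exact Finset.sum_eq_zero fun i _ => by
    rw [hu (n + i) (Nat.le_add_right n i), Int.cast_zero, zero_div]

lemma betaPartialSum_mono (hβ : 0 < β) (hu : ∀ i, 0 ≤ u i) : Monotone (betaPartialSum β u) :=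
  monotone_nat_of_le_succ fun k => by
    rw [betaPartialSum_succ]
    exact le_add_of_nonneg_right (div_nonneg (Int.cast_nonneg (hu k)) (by positivity))

lemma iterate_betaMap_eq_of_betaDigit_eq (hβ : β ≠ 0) {x : ℝ} {k : ℕ}
    (h : ∀ i < k, betaDigit β x i = u i) :
    (betaMap β)^[k] x = β ^ k * (x - betaPartialSum β u k) := by
  induction k with
  | zero => simp [betaPartialSum]
  | succ k ih =>
    have hk : ⌊β * (betaMap β)^[k] x⌋ = u k := h k k.lt_succ_self
    rw [Function.iterate_succ_apply', betaMap, Int.fract, hk,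
      ih fun i hi => h i (hi.trans k.lt_succ_self), betaPartialSum_succ]
    field_simp
    ring

lemma betaDigit_eq_iff_mem_betaInterval (hβ : 0 < β) {x : ℝ} {k : ℕ}
    (h : ∀ i < k, betaDigit β x i = u i) :
    betaDigit β x k = u k ↔ x ∈ betaInterval β u (k + 1) := by
  have hpow : 0 < β ^ (k + 1) := by positivity
  have hscale : β * (β ^ k * (x - betaPartialSum β u k)) =
      β ^ (k + 1) * (x - betaPartialSum β u k) := by
    ring
  rw [betaDigit, iterate_betaMap_eq_of_betaDigit_eq u hβ.ne' h, Int.floor_eq_iff, hscale,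
    ← div_le_iff₀' hpow, ← lt_div_iff₀' hpow, add_div, one_div, betaInterval, mem_Ico,
    betaPartialSum_succ]
  constructor <;> rintro ⟨h₁, h₂⟩ <;> constructor <;> linarith

lemma mem_Ico_and_betaDigit_eq_iff (hβ : 0 < β) (x : ℝ) (k : ℕ) :
    (x ∈ Ico (0 : ℝ) 1 ∧ ∀ i < k, betaDigit β x i = u i) ↔
      ∀ i ≤ k, x ∈ betaInterval β u i := by
  induction k with
  | zero => simp [betaInterval, betaPartialSum]
  | succ k ih =>
    simp only [← Nat.lt_succ_iff] at ih ⊢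
    rw [Nat.forall_lt_succ_right, Nat.forall_lt_succ_right (n := k + 1), ← and_assoc, ← ih]
    exact and_congr_right fun h => betaDigit_eq_iff_mem_betaInterval u hβ h.2

lemma setOf_forall_mem_betaInterval_eq_Ico (hu : Monotone (betaPartialSum β u)) (k : ℕ) :
    {x | ∀ i ≤ k, x ∈ betaInterval β u i} = Ico (betaPartialSum β u k)
      ((Finset.range (k + 1)).inf' Finset.nonempty_range_add_one
        fun i => betaPartialSum β u i + (β ^ i)⁻¹) := by
  ext x
  simp only [mem_ofPred_eq, betaInterval, mem_Ico, Finset.lt_inf'_iff, Finset.mem_range,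
    Nat.lt_succ_iff]
  constructor
  · intro h
    exact ⟨(h k le_rfl).1, fun i hi => (h i hi).2⟩
  · rintro ⟨h₁, h₂⟩ i hi
    exact ⟨(hu hi).trans h₁, h₂ i hi⟩

lemma setOf_forall_mem_betaInterval_add (hβ : 1 ≤ β) {n : ℕ} (hu : ∀ i ≥ n, u i = 0)
    (j : ℕ) :
    {x | ∀ i ≤ n + j, x ∈ betaInterval β u i} =
      {x | ∀ i ≤ n, x ∈ betaInterval β u i} ∩
        Ico (betaPartialSum β u n) (betaPartialSum β u n + (β ^ (n + j))⁻¹) := by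
  ext x
  simp only [mem_inter_iff, mem_ofPred_eq]
  constructor
  · intro h
    refine ⟨fun i hi => h i (by omega), ?_⟩
    simpa only [betaInterval, betaPartialSum_add_of_eq_zero u hu] using h (n + j) le_rfl
  · rintro ⟨h, hx⟩ i hi
    rcases le_or_gt i n with hin | hni
    · exact h i hin
    · obtain ⟨m, rfl⟩ := Nat.exists_eq_add_of_le hni.le
      rw [betaInterval, betaPartialSum_add_of_eq_zero u hu]
      refine Ico_subset_Ico_right ?_ hx
      gcongr

end PartialSums

lemma betaDigit_nonneg {β x : ℝ} (hβ : 0 ≤ β) (hx : 0 ≤ x) (k : ℕ) :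
    0 ≤ betaDigit β x k := by
  refine Int.floor_nonneg.2 (mul_nonneg hβ ?_)
  cases k with
  | zero => exact hx
  | succ k =>
    rw [Function.iterate_succ_apply']
    exact Int.fract_nonneg _

lemma getD_nonneg_of_betaCyl_nonempty {β : ℝ} (hβ : 0 ≤ β) {w : List ℤ}
    (hw : (betaCyl β w).Nonempty) (i : ℕ) : 0 ≤ w.getD i 0 := by
  obtain ⟨x, hx, hd⟩ := hw
  by_cases hi : i < w.length
  · have h := betaDigit_nonneg hβ hx.1 i
    rwa [hd i hi, List.get_eq_getElem, ← List.getD_eq_getElem _ 0 hi] at h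
  · rw [List.getD_eq_default _ _ (not_lt.1 hi)]

lemma betaCyl_eq_setOf_forall_mem_betaInterval {β : ℝ} (hβ : 0 < β) (w : List ℤ) :
    betaCyl β w = {x | ∀ i ≤ w.length, x ∈ betaInterval β (w.getD · 0) i} := by
  ext x
  rw [mem_ofPred_eq, ← mem_Ico_and_betaDigit_eq_iff _ hβ]
  exact and_congr_right fun _ => forall₂_congr fun i hi => by
    rw [List.getD_eq_getElem _ _ hi]
    rfl

lemma betaCyl_append_replicate_zero {β : ℝ} (hβ : 0 < β) (w : List ℤ) (j : ℕ) :
    betaCyl β (w ++ List.replicate j 0) =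
      {x | ∀ i ≤ w.length + j, x ∈ betaInterval β (w.getD · 0) i} := by
  have : ((w ++ List.replicate j 0).getD · 0) = (w.getD · 0) := funext fun i => by grind
  rw [betaCyl_eq_setOf_forall_mem_betaInterval hβ, this, List.length_append,
    List.length_replicate]

lemma exists_betaCyl_append_replicate_zero_eq_Ico {β : ℝ} (hβ : 1 < β) (w : List ℤ)
    (hw : (betaCyl β w).Nonempty) :
    ∃ a b : ℝ, a < b ∧ b ≤ a + (β ^ w.length)⁻¹ ∧
      ∀ j, betaCyl β (w ++ List.replicate j 0) =
        Ico a (min b (a + (β ^ (w.length + j))⁻¹)) := by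
  have hβ₀ : 0 < β := by linarith
  set u : ℕ → ℤ := (w.getD · 0)
  have hmono := betaPartialSum_mono u hβ₀ (getD_nonneg_of_betaCyl_nonempty hβ₀.le hw)
  have hzero : ∀ i ≥ w.length, u i = 0 := fun i hi => List.getD_eq_default _ _ hi
  set a := betaPartialSum β u w.length
  set b := (Finset.range (w.length + 1)).inf' Finset.nonempty_range_add_one
    fun i => betaPartialSum β u i + (β ^ i)⁻¹
  have hb : b ≤ a + (β ^ w.length)⁻¹ := Finset.inf'_le _ (Finset.self_mem_range_succ _)
  have hcyl : ∀ j, betaCyl β (w ++ List.replicate j 0) =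
      Ico a (min b (a + (β ^ (w.length + j))⁻¹)) := by
    intro j
    rw [betaCyl_append_replicate_zero hβ₀, setOf_forall_mem_betaInterval_add u hβ.le hzero,
      setOf_forall_mem_betaInterval_eq_Ico u hmono, Ico_inter_Ico, sup_idem]
  refine ⟨a, b, ?_, hb, hcyl⟩
  have hw₀ := hcyl 0
  rw [List.replicate_zero, List.append_nil, add_zero, min_eq_left hb] at hw₀
  exact nonempty_Ico.1 (hw₀ ▸ hw)

lemma exists_pow_inv_lt_le {β r : ℝ} (hβ : 1 < β) (n : ℕ) (hr : 0 < r)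
    (hrn : r ≤ (β ^ n)⁻¹) :
    ∃ l : ℕ, (β ^ (n + l + 1))⁻¹ < r ∧ r ≤ (β ^ (n + l))⁻¹ := by
  have hβn : 0 < β ^ n := by positivity
  have hnr : β ^ n * r ≤ 1 :=
    calc β ^ n * r ≤ β ^ n * (β ^ n)⁻¹ := by gcongr
      _ = 1 := mul_inv_cancel₀ hβn.ne'
  obtain ⟨l, h₁, h₂⟩ := exists_nat_pow_near ((one_le_inv₀ (by positivity)).2 hnr) hβ
  refine ⟨l, ?_, ?_⟩
  · rw [inv_lt_iff_one_lt_mul₀' (by positivity), add_assoc, pow_add, mul_comm (β ^ n),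
      mul_assoc]
    rwa [inv_lt_iff_one_lt_mul₀' (by positivity), mul_comm] at h₂
  · rw [le_inv_comm₀ hr (by positivity), pow_add]
    rwa [mul_inv, le_inv_mul_iff₀ hβn] at h₁

theorem betaCyl_scaled_copy_general (β : ℝ) (hβ1 : 1 < β)
    (w : List ℤ) (hw : (betaCyl β w).Nonempty) :
    ∃ l : ℕ,
      betaCyl β w = betaCyl β (w ++ List.replicate l 0) ∧
      (∃ a : ℝ, betaCyl β (w ++ List.replicate (l + 1) 0) =
        (fun x => a + β ^ (-((w.length + l + 1 : ℕ) : ℤ)) * x) '' Ico (0:ℝ) 1) ∧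
      volume (betaCyl β w) ≤ ENNReal.ofReal β * volume (betaCyl β (w ++ List.replicate (l + 1) 0)) := by
  obtain ⟨a, b, hab, hb, hcyl⟩ := exists_betaCyl_append_replicate_zero_eq_Ico hβ1 w hw
  obtain ⟨l, hlt, hle⟩ := exists_pow_inv_lt_le hβ1 w.length (sub_pos.2 hab) (by linarith)
  have hw₀ : betaCyl β w = Ico a b := by
    simpa [min_eq_left hb] using hcyl 0
  have hcopy : betaCyl β (w ++ List.replicate (l + 1) 0) =
      Ico a (a + (β ^ (w.length + l + 1))⁻¹) := by
    rw [hcyl, ← add_assoc, min_eq_right (by linarith)]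
  refine ⟨l, ?_, ⟨a, ?_⟩, ?_⟩
  · rw [hw₀, hcyl, min_eq_left (by linarith)]
  · have haffine : (fun x => a + β ^ (-((w.length + l + 1 : ℕ) : ℤ)) * x) =
        ((β ^ (w.length + l + 1))⁻¹ * · + a) := by
      ext x
      rw [zpow_neg, zpow_natCast, add_comm]
    rw [hcopy, haffine, image_affine_Ico (by positivity), mul_zero, zero_add, mul_one, add_comm]
  · rw [hw₀, hcopy, Real.volume_Ico, Real.volume_Ico, ← ENNReal.ofReal_mul (by linarith)]
    refine ENNReal.ofReal_le_ofReal (hle.trans_eq ?_)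
    rw [pow_succ]
    field_simp
    ring

/-- for `β ∈ (1,2)` with terminating expansion of `1` and any nonempty
cylinder `C_{x₀…x_{n-1}}`, there is `l ≥ 0` such that appending `0^l` does not change
the cylinder, appending `0^{l+1}` yields an affine copy of `[0,1)` scaled by
`β^{-(n+l+1)}`, and this copy has length at least `|C_{x₀…x_{n-1}}|/β`. -/
theorem betaCyl_scaled_copy (β : ℝ) (hβ1 : 1 < β) (hβ2 : β < 2)
    (hterm : TerminatesAtOne β)
    (w : List ℤ) (hw : (betaCyl β w).Nonempty) :
    ∃ l : ℕ,
      betaCyl β w = betaCyl β (w ++ List.replicate l 0) ∧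
      (∃ a : ℝ, betaCyl β (w ++ List.replicate (l + 1) 0) =
        (fun x => a + β ^ (-((w.length + l + 1 : ℕ) : ℤ)) * x) '' Ico (0:ℝ) 1) ∧
      volume (betaCyl β w) ≤ ENNReal.ofReal β * volume (betaCyl β (w ++ List.replicate (l + 1) 0)) :=
  betaCyl_scaled_copy_general β hβ1 w hw
end
end
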